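/- arXiv:1201.5992 — 2 statements merged into one kernel-verified Lean document; each statement's English description precedes it below -/
import Mathlib

section
/- Let q = p be an odd prime and let U ⊆ F_p³ be a set of p² − 2 points that does not determine the points of C, with ∑_{u∈U} u = (0,0,0). Let (y,z,w) ∈ F_p³ be nonzero with σ₂(y,z,w) = 0. Then |π(0,y,z,w) ∩ U| ≡ −2 (mod p), and for every x ∈ F_p with x ≠ 0, |π(x,y,z,w) ∩ U| ≡ 0 (mod p). -/
/-- The dot product on `F³`. -/
def dot3 {F : Type*} [Field F] (u v : F × F × F) : F :=
  u.1 * v.1 + u.2.1 * v.2.1 + u.2.2 * v.2.2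

/-- The nondegenerate quadratic form `Q(t₀,t₁,t₂) = t₁² − t₀t₂` defining the conic `C`. -/
def quadQ {F : Type*} [Field F] (t : F × F × F) : F :=
  t.2.1 ^ 2 - t.1 * t.2.2

/-- `U` does not determine the points of the conic `C`:
`Q(u − u') ≠ 0` for all distinct `u, u' ∈ U`. -/
def NoDetermine {F : Type*} [Field F] (U : Finset (F × F × F)) : Prop :=
  ∀ u ∈ U, ∀ u' ∈ U, u ≠ u' → quadQ (u - u') ≠ 0

/-- The line at infinity `l(y,z,w)` meets the conic `C`. -/
def MeetsConic {F : Type*} [Field F] (v : F × F × F) : Prop :=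
  ∃ t : F × F × F, t ≠ 0 ∧ quadQ t = 0 ∧ dot3 v t = 0

/-- `σ_i(y,z,w)`: the `i`-th elementary symmetric function of the multiset
`{u·(y,z,w) : u ∈ U}`. -/
def sigmaU {F : Type*} [Field F] (U : Finset (F × F × F)) (v : F × F × F) (i : ℕ) : F :=
  (U.val.map (fun u => dot3 u v)).esymm i

/-!
If the line at infinity of `v` meets the conic at `t`, then every plane `u · v = y` contains at most
`q` points of `U`: it is covered by `q` lines of direction `t`, and each of them meets `U` at most
once. As `|U| = q² - 2`, the multiset `{u · v : u ∈ U}` is `q` copies of `F_q` with two values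
`b₁, b₂` removed, and `∑ u = 0` forces `b₂ = -b₁`. Hence the power sums `P_k(v) = ∑ (u · v)^k`
satisfy `(-2)^⌊k/2⌋ P_k + (1 + (-1)^k) P_2^⌊k/2⌋ = 0`.

To reach the remaining `v` (with `v₂ ≠ 0`), substitute `v = (c s₀ s₁, -c (s₀ + s₁), c)`, a vector
that always meets the conic, at `(1, s₀, s₀²)`. For `k < q` the identity becomes a polynomial in
`s` of degree `< q` in each variable vanishing on `F_q²`, hence the zero polynomial; evaluating it
at the roots `s₀, s₁` of `c X² + v₁ X + v₀` in the algebraic closure gives the identity at `v`.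

If moreover `σ₂(v) = 0`, then `P_2(v) = 0`, so `P_k(v) = 0` for `1 ≤ k ≤ q - 1`, and summing the
indicator `1 - (y - u · v)^(q-1)` over `U` gives `|π ∩ U| ≡ |U| (1 - y^(q-1)) = -2 (1 - y^(q-1))`.
-/

open Finset MvPolynomial

theorem Multiset.two_mul_esymm_two {R : Type*} [CommRing R] (s : Multiset R) :
    2 * s.esymm 2 = s.sum ^ 2 - (s.map (· ^ 2)).sum := by
  induction s using Multiset.induction_on with
  | empty => simp [Multiset.esymm, Multiset.powersetCard_zero_right]
  | cons a s ih =>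
    have h₁ : s.esymm 1 = s.sum := by simp [Multiset.esymm, Multiset.powersetCard_one]
    have h₂ : (a ::ₘ s).esymm 2 = s.esymm 2 + a * s.esymm 1 := by
      simp [Multiset.esymm, Multiset.powersetCard_cons, Multiset.sum_map_mul_left]
    rw [h₂, h₁, Multiset.sum_cons, Multiset.map_cons, Multiset.sum_cons]
    linear_combination ih

theorem Multiset.exists_add_pair_eq_nsmul_univ {α : Type*} [Fintype α] [DecidableEq α]
    {s : Multiset α} {n : ℕ} (hcount : ∀ a, s.count a ≤ n)
    (hcard : card s + 2 = n * Fintype.card α) :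
    ∃ b₁ b₂, s + {b₁, b₂} = n • (Finset.univ : Finset α).val := by
  have hle : s ≤ n • (Finset.univ : Finset α).val :=
    le_iff_count.2 fun a => by rw [count_nsmul, count_univ, mul_one]; exact hcount a
  have htwo : card (n • (Finset.univ : Finset α).val - s) = 2 := by
    rw [card_sub hle, card_nsmul, ← Finset.card_def, Finset.card_univ]
    omega
  obtain ⟨b₁, b₂, hb⟩ := card_eq_two.1 htwo
  exact ⟨b₁, b₂, by rw [← hb, add_tsub_cancel_of_le hle]⟩

theorem Finset.card_filter_eq_of_sum_pow_eq_zero {F ι : Type*} [Field F] [Fintype F]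
    [DecidableEq F] (s : Finset ι) (f : ι → F)
    (h : ∀ k, 1 ≤ k → k < Fintype.card F → ∑ i ∈ s, f i ^ k = 0) (y : F) :
    (#{i ∈ s | f i = y} : F) = #s * (1 - y ^ (Fintype.card F - 1)) := by
  set n := Fintype.card F - 1
  have hind (a : F) : (if a = y then 1 else 0 : F) = 1 - (-a + y) ^ n := by
    split_ifs with ha
    · rw [ha, neg_add_cancel, zero_pow (by have := Fintype.one_lt_card (α := F); omega), sub_zero]
    · rw [FiniteField.pow_card_sub_one_eq_one _ (mt neg_add_eq_zero.mp ha), sub_self]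
  have hexp : ∑ i ∈ s, (-f i + y) ^ n = #s * y ^ n := by
    simp_rw [add_pow, Finset.sum_comm (s := s)]
    rw [Finset.sum_eq_single_of_mem 0 (by simp)]
    · simp
    · intro m hm hm0
      simp_rw [neg_pow (f _), mul_assoc, ← Finset.mul_sum, ← Finset.sum_mul]
      rw [h m (by omega) (by have := Finset.mem_range.mp hm; omega)]
      simp
  rw [← Finset.sum_boole, Finset.sum_congr rfl fun i _ => hind (f i), Finset.sum_sub_distrib, hexp,
    Finset.sum_const, nsmul_eq_mul, mul_one]
  ring

theorem IsAlgClosed.exists_add_eq_and_mul_eq {K : Type*} [Field K] [IsAlgClosed K] (a b : K) :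
    ∃ s₀ s₁ : K, s₀ + s₁ = a ∧ s₀ * s₁ = b := by
  obtain ⟨s, hs⟩ := IsAlgClosed.exists_root
    (Polynomial.C 1 * Polynomial.X ^ 2 + Polynomial.C (-a) * Polynomial.X + Polynomial.C b)
    (by rw [Polynomial.degree_quadratic one_ne_zero]; decide)
  refine ⟨s, a - s, by ring, ?_⟩
  simp only [Polynomial.IsRoot.def, Polynomial.eval_add, Polynomial.eval_mul, Polynomial.eval_pow,
    Polynomial.eval_C, Polynomial.eval_X] at hs
  linear_combination -hs

theorem MvPolynomial.eq_zero_of_eval_eq_zero_of_degreeOf_lt {K : Type*} [Field K] [Fintype K]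
    {n : ℕ} {P : MvPolynomial (Fin n) K} (h : ∀ x, eval x P = 0)
    (hdeg : ∀ i, degreeOf i P < Fintype.card K) : P = 0 := by
  -- `eq_zero_of_eval_eq_zero` wants the variables in the universe of `K`.
  have hP : rename (Equiv.ulift.{_, 0}).symm P = 0 := by
    refine eq_zero_of_eval_eq_zero _ _ _ (fun x => by rw [eval_rename, h]) ?_
    refine (mem_restrictDegree _ _ _).mpr fun s hs i => degreeOf_le_iff.mp ?_ s hs
    exact (degreeOf_rename_of_injective Equiv.ulift.symm.injective i.down).trans_le
      (Nat.le_sub_one_of_lt (hdeg i.down))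
  exact rename_injective _ Equiv.ulift.symm.injective (by rw [hP, map_zero])

namespace ConicNonDetermining

variable {F : Type*} [Field F]

theorem dot3_comm (a b : F × F × F) : dot3 a b = dot3 b a := by
  simp only [dot3]; ring

theorem dot3_sub_left (a b w : F × F × F) : dot3 (a - b) w = dot3 a w - dot3 b w := by
  simp only [dot3, Prod.fst_sub, Prod.snd_sub]; ring

theorem dot3_zero_left (w : F × F × F) : dot3 0 w = 0 := by
  simp only [dot3, Prod.fst_zero, Prod.snd_zero]; ring

theorem sum_dot3_left (s : Finset (F × F × F)) (w : F × F × F) :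
    ∑ u ∈ s, dot3 u w = dot3 (∑ u ∈ s, u) w := by
  simp only [dot3, Prod.fst_sum, Prod.snd_sum, sum_add_distrib, sum_mul]

theorem exists_dot3_ne_zero {v : F × F × F} (hv : v ≠ 0) : ∃ s, dot3 v s ≠ 0 := by
  by_contra! h
  exact hv (Prod.ext (by simpa [dot3] using h (1, 0, 0))
    (Prod.ext (by simpa [dot3] using h (0, 1, 0)) (by simpa [dot3] using h (0, 0, 1))))

theorem quadQ_smul (c : F) (t : F × F × F) : quadQ (c • t) = c ^ 2 * quadQ t := by
  simp only [quadQ, Prod.smul_fst, Prod.smul_snd, smul_eq_mul]; ring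

def cross (a b : F × F × F) : F × F × F :=
  (a.2.1 * b.2.2 - a.2.2 * b.2.1, a.2.2 * b.1 - a.1 * b.2.2, a.1 * b.2.1 - a.2.1 * b.1)

theorem cross_smul_right (c : F) (a b : F × F × F) : cross a (c • b) = c • cross a b := by
  ext <;> simp only [cross, Prod.smul_fst, Prod.smul_snd, smul_eq_mul] <;> ring

theorem cross_cross (d v w : F × F × F) :
    cross d (cross v w) = dot3 d w • v - dot3 d v • w := by
  ext <;> simp only [cross, dot3, Prod.fst_sub, Prod.snd_sub, Prod.smul_fst, Prod.smul_snd,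
    smul_eq_mul] <;> ring

theorem exists_cross_eq {v t : F × F × F} (hv : v ≠ 0) (ht : dot3 v t = 0) :
    ∃ w, cross v w = t := by
  obtain ⟨s, hs⟩ := exists_dot3_ne_zero hv
  refine ⟨(dot3 v s)⁻¹ • cross t s, ?_⟩
  rw [cross_smul_right, cross_cross, ht, zero_smul, sub_zero, inv_smul_smul₀ hs]

theorem exists_eq_smul_of_cross_eq_zero {d t : F × F × F} (ht : t ≠ 0) (h : cross d t = 0) :
    ∃ c : F, d = c • t := by
  obtain ⟨s, hs⟩ := exists_dot3_ne_zero ht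
  have hst : dot3 t s • d = dot3 d s • t := by
    have h' := cross_cross s d t
    rw [h, dot3_comm s t, dot3_comm s d] at h'
    exact sub_eq_zero.mp (h'.symm.trans (by simp [cross]))
  exact ⟨(dot3 t s)⁻¹ * dot3 d s, by rw [mul_smul, ← hst, inv_smul_smul₀ hs]⟩

theorem card_filter_dot3_eq_le [Fintype F] [DecidableEq F] {U : Finset (F × F × F)}
    (hU : NoDetermine U) {v : F × F × F} (hv : v ≠ 0) (hvC : MeetsConic v) (y : F) :
    #{a ∈ U | dot3 a v = y} ≤ Fintype.card F := by
  obtain ⟨t, ht, htQ, hvt⟩ := hvC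
  obtain ⟨w, rfl⟩ := exists_cross_eq hv hvt
  refine (card_le_card_of_injOn (dot3 · w) (fun _ _ => mem_coe.2 (mem_univ _)) ?_).trans_eq
    card_univ
  intro a ha b hb hab
  simp only [coe_filter, Set.mem_ofPred_eq] at ha hb hab
  by_contra hne
  have hd : cross (a - b) (cross v w) = 0 := by
    rw [cross_cross, dot3_sub_left, dot3_sub_left, ha.2, hb.2, hab, sub_self, sub_self,
      zero_smul, zero_smul, sub_zero]
  obtain ⟨c, hc⟩ := exists_eq_smul_of_cross_eq_zero ht hd
  exact hU a ha.1 b hb.1 hne (by rw [hc, quadQ_smul, htQ, mul_zero])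

theorem exists_sum_dot3_pow_add_eq_zero [Fintype F] [DecidableEq F] {U : Finset (F × F × F)}
    (hUcard : #U = Fintype.card F ^ 2 - 2) (hU : NoDetermine U) {v : F × F × F} (hv : v ≠ 0)
    (hvC : MeetsConic v) : ∃ b₁ b₂ : F, ∀ j, ∑ u ∈ U, dot3 u v ^ j + (b₁ ^ j + b₂ ^ j) = 0 := by
  have hcount (y : F) : (U.val.map (dot3 · v)).count y ≤ Fintype.card F := by
    rw [Multiset.count_map, ← filter_val, card_val]
    simpa only [eq_comm] using card_filter_dot3_eq_le hU hv hvC y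
  have hcard : Multiset.card (U.val.map (dot3 · v)) + 2 = Fintype.card F * Fintype.card F := by
    have := Fintype.one_lt_card (α := F)
    rw [Multiset.card_map, card_val, hUcard, sq, Nat.sub_add_cancel (by nlinarith)]
  obtain ⟨b₁, b₂, hb⟩ := Multiset.exists_add_pair_eq_nsmul_univ hcount hcard
  refine ⟨b₁, b₂, fun j => ?_⟩
  have := congrArg (fun m => (m.map (· ^ j)).sum) hb
  simp only [Multiset.insert_eq_cons, Multiset.map_add, Multiset.map_cons, Multiset.map_map,
    Function.comp_apply, Multiset.map_singleton, Multiset.sum_add, Multiset.sum_cons, sum_map_val,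
    Multiset.sum_singleton, Multiset.map_nsmul, Multiset.sum_nsmul, nsmul_eq_mul,
    Nat.cast_card_eq_zero, zero_mul] at this
  linear_combination this

def psumDefect {R : Type*} [CommRing R] (P : ℕ → R) (k : ℕ) : R :=
  (-2) ^ (k / 2) * P k + (1 + (-1) ^ k) * P 2 ^ (k / 2)

theorem map_psumDefect {R S G : Type*} [CommRing R] [CommRing S] [FunLike G R S]
    [RingHomClass G R S] (f : G) (P : ℕ → R) (k : ℕ) :
    f (psumDefect P k) = psumDefect (f ∘ P) k := by
  simp [psumDefect, map_ofNat]

theorem psumDefect_eq_zero_of_forall {R : Type*} [CommRing R] {P : ℕ → R} {b : R}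
    (hP : ∀ j, P j + (b ^ j + (-b) ^ j) = 0) (k : ℕ) : psumDefect P k = 0 := by
  have hP' (j : ℕ) : P j = -(1 + (-1) ^ j) * b ^ j := by
    linear_combination (neg_pow b j) + hP j
  obtain ⟨m, rfl | rfl⟩ := Nat.even_or_odd' k
  · simp only [psumDefect, hP', Nat.mul_div_cancel_left m two_pos, pow_mul]
    ring
  · simp only [psumDefect, hP', pow_succ, pow_mul]
    ring

theorem psumDefect_eq_zero_of_meetsConic [Fintype F] [DecidableEq F] {U : Finset (F × F × F)}
    (hUcard : #U = Fintype.card F ^ 2 - 2) (hU : NoDetermine U) (hsum : ∑ u ∈ U, u = 0)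
    {v : F × F × F} (hv : v ≠ 0) (hvC : MeetsConic v) (k : ℕ) :
    psumDefect (fun j => ∑ u ∈ U, dot3 u v ^ j) k = 0 := by
  obtain ⟨b₁, b₂, hb⟩ := exists_sum_dot3_pow_add_eq_zero hUcard hU hv hvC
  have hb₂ : b₂ = -b₁ := by
    have h₁ := hb 1
    simp only [pow_one] at h₁
    rw [sum_dot3_left, hsum, dot3_zero_left] at h₁
    linear_combination h₁
  subst hb₂
  exact psumDefect_eq_zero_of_forall hb k

theorem degreeOf_psumDefect_le {R σ : Type*} [CommRing R] (i : σ)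
    {P : ℕ → MvPolynomial σ R} (hP : ∀ j, degreeOf i (P j) ≤ j) (k : ℕ) :
    degreeOf i (psumDefect P k) ≤ k := by
  have hconst (r : R) : degreeOf i (C r) = 0 := degreeOf_C r i
  rw [psumDefect, show (-2 : MvPolynomial σ R) ^ (k / 2) = C ((-2) ^ (k / 2)) by
      rw [map_pow, map_neg, map_ofNat],
    show (1 + (-1) ^ k : MvPolynomial σ R) = C (1 + (-1) ^ k) by
      rw [map_add, map_one, map_pow, map_neg, map_one]]
  refine (degreeOf_add_le _ _ _).trans (max_le ?_ ?_)
  · exact (degreeOf_mul_le _ _ _).trans (by rw [hconst, zero_add]; exact hP k)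
  · refine (degreeOf_mul_le _ _ _).trans ?_
    rw [hconst, zero_add]
    refine (degreeOf_pow_le _ _ _).trans ((Nat.mul_le_mul_left _ (hP 2)).trans ?_)
    omega

noncomputable def paramForm (c : F) (u : F × F × F) : MvPolynomial (Fin 2) F :=
  C c * (C u.1 * (X 0 * X 1) - C u.2.1 * (X 0 + X 1) + C u.2.2)

theorem aeval_paramForm {K : Type*} [CommRing K] [Algebra F K] (c : F) (u : F × F × F)
    (s : Fin 2 → K) :
    aeval s (paramForm c u) = algebraMap F K c * (algebraMap F K u.1 * (s 0 * s 1) -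
      algebraMap F K u.2.1 * (s 0 + s 1) + algebraMap F K u.2.2) := by
  simp [paramForm]

theorem eval_paramForm (c : F) (u : F × F × F) (s : Fin 2 → F) :
    eval s (paramForm c u) = dot3 u (c * (s 0 * s 1), -(c * (s 0 + s 1)), c) := by
  simp only [paramForm, dot3, map_add, map_sub, map_mul, eval_C, eval_X]
  ring

theorem meetsConic_param (c s₀ s₁ : F) : MeetsConic (c * (s₀ * s₁), -(c * (s₀ + s₁)), c) :=
  ⟨(1, s₀, s₀ ^ 2), by simp, by simp only [quadQ]; ring, by simp only [dot3]; ring⟩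

theorem degreeOf_paramForm_le (c : F) (u : F × F × F) (i : Fin 2) :
    degreeOf i (paramForm c u) ≤ 1 := by
  have hX (j : Fin 2) : degreeOf i (X j : MvPolynomial (Fin 2) F) ≤ 1 := by
    rw [degreeOf_X]; split_ifs <;> omega
  have hXX : degreeOf i (X 0 * X 1 : MvPolynomial (Fin 2) F) ≤ 1 :=
    (degreeOf_mul_le _ _ _).trans (by fin_cases i <;> simp [degreeOf_X])
  refine (degreeOf_C_mul_le _ _ _).trans <| (degreeOf_add_le _ _ _).trans <| max_le
    ((degreeOf_sub_le _ _ _).trans <| max_le ((degreeOf_C_mul_le _ _ _).trans hXX)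
      ((degreeOf_C_mul_le _ _ _).trans <| (degreeOf_add_le _ _ _).trans <| max_le (hX 0) (hX 1)))
    (by rw [degreeOf_C]; omega)

theorem degreeOf_sum_pow_paramForm_le (U : Finset (F × F × F)) (c : F) (i : Fin 2) (j : ℕ) :
    degreeOf i (∑ u ∈ U, paramForm c u ^ j) ≤ j :=
  (degreeOf_sum_le _ _ _).trans <| Finset.sup_le fun u _ =>
    (degreeOf_pow_le _ _ _).trans ((Nat.mul_le_mul_left j (degreeOf_paramForm_le c u i)).trans_eq
      (mul_one j))

theorem psumDefect_eq_zero [Fintype F] [DecidableEq F] {U : Finset (F × F × F)}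
    (hUcard : #U = Fintype.card F ^ 2 - 2) (hU : NoDetermine U) (hsum : ∑ u ∈ U, u = 0)
    {v : F × F × F} (hv : v ≠ 0) {k : ℕ} (hk : k < Fintype.card F) :
    psumDefect (fun j => ∑ u ∈ U, dot3 u v ^ j) k = 0 := by
  by_cases hvC : MeetsConic v
  · exact psumDefect_eq_zero_of_meetsConic hUcard hU hsum hv hvC k
  have hc : v.2.2 ≠ 0 := fun h => hvC ⟨(0, 0, 1), by simp, by simp [quadQ], by simp [dot3, h]⟩
  have hD : psumDefect (fun j => ∑ u ∈ U, paramForm v.2.2 u ^ j) k = 0 := by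
    refine eq_zero_of_eval_eq_zero_of_degreeOf_lt (fun s => ?_) (fun i => ?_)
    · rw [map_psumDefect]
      simpa only [Function.comp_def, map_sum, map_pow, eval_paramForm] using
        psumDefect_eq_zero_of_meetsConic hUcard hU hsum (by simp [hc]) (meetsConic_param _ _ _) k
    · exact (degreeOf_psumDefect_le i (degreeOf_sum_pow_paramForm_le U _ i) k).trans_lt hk
  set K := AlgebraicClosure F
  obtain ⟨s₀, s₁, hadd, hmul⟩ := IsAlgClosed.exists_add_eq_and_mul_eq
    (-(algebraMap F K v.2.1 / algebraMap F K v.2.2)) (algebraMap F K v.1 / algebraMap F K v.2.2)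
  have hc' : algebraMap F K v.2.2 ≠ 0 := by simpa using hc
  have hmul' : algebraMap F K v.2.2 * (s₀ * s₁) = algebraMap F K v.1 := by
    rw [hmul, mul_div_cancel₀ _ hc']
  have hadd' : -(algebraMap F K v.2.2 * (s₀ + s₁)) = algebraMap F K v.2.1 := by
    rw [hadd, mul_neg, neg_neg, mul_div_cancel₀ _ hc']
  have hform (u : F × F × F) :
      aeval ![s₀, s₁] (paramForm v.2.2 u) = algebraMap F K (dot3 u v) := by
    simp only [aeval_paramForm, Matrix.cons_val_zero, Matrix.cons_val_one, dot3, map_add, map_mul]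
    linear_combination algebraMap F K u.1 * hmul' + algebraMap F K u.2.1 * hadd'
  have hDK := congrArg (aeval ![s₀, s₁]) hD
  rw [map_psumDefect, map_zero] at hDK
  apply (algebraMap F K).injective
  rw [map_psumDefect, map_zero, ← hDK]
  congr 1
  funext j
  simp [map_sum, hform]

theorem sum_dot3_pow_eq_zero [Fintype F] [DecidableEq F] (h2 : (2 : F) ≠ 0)
    {U : Finset (F × F × F)} (hUcard : #U = Fintype.card F ^ 2 - 2) (hU : NoDetermine U)
    (hsum : ∑ u ∈ U, u = 0) {v : F × F × F} (hv : v ≠ 0) (hsq : ∑ u ∈ U, dot3 u v ^ 2 = 0)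
    {k : ℕ} (hk₀ : 1 ≤ k) (hk : k < Fintype.card F) : ∑ u ∈ U, dot3 u v ^ k = 0 := by
  have hD := psumDefect_eq_zero hUcard hU hsum hv hk
  simp only [psumDefect, hsq] at hD
  obtain hk₁ | hk₁ := Nat.eq_zero_or_pos (k / 2)
  · obtain rfl : k = 1 := by omega
    simpa using hD
  · rw [zero_pow hk₁.ne', mul_zero, add_zero] at hD
    exact (mul_eq_zero.mp hD).resolve_left (pow_ne_zero _ (neg_ne_zero.mpr h2))

theorem sum_dot3_sq_eq_zero {U : Finset (F × F × F)} (hsum : ∑ u ∈ U, u = 0)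
    {v : F × F × F} (hsig : sigmaU U v 2 = 0) : ∑ u ∈ U, dot3 u v ^ 2 = 0 := by
  have h := Multiset.two_mul_esymm_two (U.val.map (dot3 · v))
  rw [Multiset.map_map] at h
  change 2 * sigmaU U v 2 = (∑ u ∈ U, dot3 u v) ^ 2 - ∑ u ∈ U, dot3 u v ^ 2 at h
  rw [hsig, sum_dot3_left, hsum, dot3_zero_left] at h
  linear_combination h

end ConicNonDetermining

open ConicNonDetermining

theorem stmt_13_general {p : ℕ} (hodd : Odd p)
    {F : Type*} [Field F] [Fintype F] [DecidableEq F]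
    (hcard : Fintype.card F = p)
    (U : Finset (F × F × F))
    (hUcard : U.card = p ^ 2 - 2)
    (hU : NoDetermine U)
    (hsum : ∑ u ∈ U, u = 0)
    (v : F × F × F) (hv : v ≠ 0)
    (hsig : sigmaU U v 2 = 0) :
    (((U.filter (fun a => dot3 v a + 0 = 0)).card : F) = -2) ∧
      ∀ x : F, x ≠ 0 → ((U.filter (fun a => dot3 v a + x = 0)).card : F) = 0 := by
  subst hcard
  have h2 : (2 : F) ≠ 0 := Ring.two_ne_zero fun h => by
    simpa [Nat.odd_iff.mp hodd] using FiniteField.even_card_of_char_two h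
  have hcount := card_filter_eq_of_sum_pow_eq_zero U (dot3 · v) fun k hk₀ hk =>
    sum_dot3_pow_eq_zero h2 hUcard hU hsum hv (sum_dot3_sq_eq_zero hsum hsig) hk₀ hk
  have hUF : (#U : F) = -2 := by
    have := Fintype.one_lt_card (α := F)
    rw [hUcard, Nat.cast_sub (by nlinarith), Nat.cast_pow, FiniteField.cast_card_eq_zero,
      zero_pow two_ne_zero, Nat.cast_ofNat, zero_sub]
  have hplane (x : F) : U.filter (fun a => dot3 v a + x = 0) = {a ∈ U | dot3 a v = -x} :=
    filter_congr fun a _ => by rw [dot3_comm, eq_neg_iff_add_eq_zero]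
  refine ⟨?_, fun x hx => ?_⟩
  · rw [hplane, neg_zero, hcount, hUF, zero_pow (by have := Fintype.one_lt_card (α := F); omega)]
    ring
  · rw [hplane, hcount, FiniteField.pow_card_sub_one_eq_one _ (neg_ne_zero.mpr hx), sub_self,
      mul_zero]

theorem stmt_13 {p : ℕ} (hp : p.Prime) (hodd : Odd p)
    {F : Type*} [Field F] [Fintype F] [DecidableEq F]
    (hcard : Fintype.card F = p)
    (U : Finset (F × F × F))
    (hUcard : U.card = p ^ 2 - 2)
    (hU : NoDetermine U)
    (hsum : ∑ u ∈ U, u = 0)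
    (v : F × F × F) (hv : v ≠ 0)
    (hsig : sigmaU U v 2 = 0) :
    (((U.filter (fun a => dot3 v a + 0 = 0)).card : F) = -2) ∧
      ∀ x : F, x ≠ 0 → ((U.filter (fun a => dot3 v a + x = 0)).card : F) = 0 :=
  stmt_13_general hodd hcard U hUcard hU hsum v hv hsig
end

section
/- Let q = p be an odd prime and let U ⊆ F_p³ be a set of p² − 2 points that does not determine the points of C, with ∑_{u∈U} u = (0,0,0). Let (y,z,w) ∈ F_p³ be nonzero and suppose σ₂(y,z,w) is a nonzero square in F_p. Then for x ∈ F_p with x² = σ₂(y,z,w), |π(x,y,z,w) ∩ U| ≡ −1 (mod p), and for x ∈ F_p with x² ≠ σ₂(y,z,w), |π(x,y,z,w) ∩ U| ≡ 0 (mod p). -/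
/-!
Modulo `p`, `|π(x, v) ∩ U| = |U| - ∑_{u ∈ U} (u·v + x)^(p-1)`, so everything rests on the identity
`∑_{u ∈ U} (u·v + x)^(p-1) = -E(σ₂(v), x)`, where `E(a², x) = (x + a)^(p-1) + (x - a)^(p-1)`.

If `v ⊥ t` for a point `t` of the conic, project `F³` onto `F³ / ⟨t⟩`. Two points of `U` in
one fibre would differ by a multiple of `t`, so `U` meets `p² - 2` fibres once and misses
exactly two, `A + ⟨t⟩` and `B + ⟨t⟩`. The map `u ↦ u·v` factors through a non-injective linear
form on `F³ / ⟨t⟩ ≅ F²`, whose fibres have size divisible by `p`. A sum of `g(w·v)` over the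
whole quotient therefore vanishes, so `∑_{u ∈ U} g(u·v) = -g(A·v) - g(B·v)` for every `g`.
Taking `g = id` and using `∑ u = 0` gives `B·v = -A·v`. Then `g(a) = a²` gives `σ₂(v) = (A·v)²`,
and `g(a) = (a + x)^(p-1)` gives the identity.

The planes `v = (r r', -(r + r'), 1)` are orthogonal to `(1, r, r²)`. After this substitution
both sides are polynomials of degree `< p` in each of `r` and `r'`, so the identity holds
identically in `r` and `r'`. Elementary symmetric polynomials are algebraically independent, so it
then holds for every `v = (y, z, 1)`. Scaling covers `w ≠ 0`, and `w = 0` is the point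
`t = (0, 0, 1)`. Finally `E(s², x)` equals `1` if `x = ±s` and `2` otherwise.
-/

open Finset

section Geometry

variable {F : Type*} [Field F]

lemma dot3_comm (u v : F × F × F) : dot3 u v = dot3 v u := by
  simp only [dot3]; ring

lemma dot3_smul_right (c : F) (u v : F × F × F) : dot3 u (c • v) = c * dot3 u v := by
  simp only [dot3, Prod.smul_fst, Prod.smul_snd, smul_eq_mul]; ring

lemma quadQ_smul (c : F) (t : F × F × F) : quadQ (c • t) = c ^ 2 * quadQ t := by
  simp only [quadQ, Prod.smul_fst, Prod.smul_snd, smul_eq_mul]; ring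

def dot3Linear (v : F × F × F) : (F × F × F) →ₗ[F] F where
  toFun u := dot3 u v
  map_add' u u' := by simp only [dot3, Prod.fst_add, Prod.snd_add]; ring
  map_smul' c u := by
    simp only [dot3, Prod.smul_fst, Prod.smul_snd, smul_eq_mul, RingHom.id_apply]; ring

lemma sum_dot3_eq_zero {U : Finset (F × F × F)} (hsum : ∑ u ∈ U, u = 0) (v : F × F × F) :
    ∑ u ∈ U, dot3 u v = 0 := by
  have h := congrArg (dot3Linear v) hsum
  rwa [map_sum, map_zero] at h

end Geometry

section Fibres

variable {F : Type*} [Field F] [Fintype F]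

/-- Every nonempty fibre of `φ` is a coset of the nonzero subspace `ker φ`, whose cardinality
is a positive power of `|F|`. -/
lemma sum_comp_linearMap_eq_zero {W : Type*} [AddCommGroup W] [Module F W] [Fintype W]
    {φ : W →ₗ[F] F} (hφ : ¬Function.Injective φ) (g : F → F) : ∑ w, g (φ w) = 0 := by
  classical
  have hker : (Fintype.card (LinearMap.ker φ) : F) = 0 := by
    have hpos : 0 < Module.finrank F (LinearMap.ker φ) := by
      rw [Module.finrank_pos_iff, Submodule.nontrivial_iff_ne_bot, ne_eq, LinearMap.ker_eq_bot]
      exact hφ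
    rw [Module.card_eq_pow_finrank (K := F), Nat.cast_pow, FiniteField.cast_card_eq_zero,
      zero_pow hpos.ne']
  rw [← sum_fiberwise_of_maps_to (g := φ) (t := univ) fun w _ => mem_univ _]
  refine sum_eq_zero fun c _ => ?_
  rw [sum_congr rfl fun w hw => by rw [(mem_filter.mp hw).2], sum_const]
  by_cases hc : c ∈ Set.range φ
  · rw [AddMonoidHom.card_fiber_eq_of_mem_range φ hc ⟨0, map_zero φ⟩, ← Fintype.card_subtype,
      ← Nat.cast_smul_eq_nsmul F,
      Fintype.card_congr (Equiv.subtypeEquivRight fun _ => LinearMap.mem_ker.symm), hker,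
      zero_smul]
  · rw [filter_eq_empty_iff.mpr fun w _ hw => hc ⟨w, hw⟩, card_empty, zero_smul]

variable {U : Finset (F × F × F)}

theorem exists_sum_comp_dot3_eq_neg_pair (hU : NoDetermine U)
    (hUcard : U.card + 2 = Fintype.card F ^ 2) {t : F × F × F} (ht : t ≠ 0) (htQ : quadQ t = 0) :
    ∃ A B : F × F × F, ∀ v, dot3 v t = 0 → ∀ g : F → F,
      ∑ u ∈ U, g (dot3 u v) = -(g (dot3 A v) + g (dot3 B v)) := by
  classical
  set L := F ∙ t
  have hinj : Set.InjOn L.mkQ U := by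
    intro u hu u' hu' h
    by_contra hne
    obtain ⟨c, hc⟩ := Submodule.mem_span_singleton.mp ((Submodule.Quotient.eq L).mp h)
    exact hU u hu u' hu' hne (by rw [← hc, quadQ_smul, htQ, mul_zero])
  have hrank : Module.finrank F ((F × F × F) ⧸ L) = 2 := by
    rw [Submodule.finrank_quotient, finrank_span_singleton ht]
    simp [Module.finrank_prod]
  have hcompl : (univ \ U.image L.mkQ).card = 2 := by
    rw [card_sdiff_of_subset (subset_univ _), card_univ, Module.card_eq_pow_finrank (K := F),
      hrank, card_image_of_injOn hinj]
    omega
  obtain ⟨A', B', hAB, hcomp⟩ := card_eq_two.mp hcompl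
  obtain ⟨A, rfl⟩ := L.mkQ_surjective A'
  obtain ⟨B, rfl⟩ := L.mkQ_surjective B'
  refine ⟨A, B, fun v hv g => ?_⟩
  let φ := L.liftQ (dot3Linear v) ((Submodule.span_singleton_le_iff_mem _ _).mpr <| by
    rw [LinearMap.mem_ker, ← hv, dot3_comm]; rfl)
  have hφ (a : F × F × F) : φ (L.mkQ a) = dot3 a v := rfl
  have hφ_ninj : ¬Function.Injective φ := fun h => by
    have := LinearMap.finrank_le_finrank_of_injective h
    rw [hrank, Module.finrank_self] at this
    omega
  calc ∑ u ∈ U, g (dot3 u v) = ∑ w ∈ U.image L.mkQ, g (φ w) := by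
        rw [sum_image hinj]; rfl
  _ = ∑ w, g (φ w) - ∑ w ∈ univ \ U.image L.mkQ, g (φ w) := by
        rw [sum_sdiff_eq_sub (subset_univ _), sub_sub_cancel]
  _ = -(g (dot3 A v) + g (dot3 B v)) := by
        rw [sum_comp_linearMap_eq_zero hφ_ninj, hcomp, sum_pair hAB, hφ, hφ, zero_sub]

theorem exists_sum_comp_dot3_eq_neg_antipodal (hU : NoDetermine U)
    (hUcard : U.card + 2 = Fintype.card F ^ 2) (hsum : ∑ u ∈ U, u = 0)
    {t : F × F × F} (ht : t ≠ 0) (htQ : quadQ t = 0) :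
    ∃ A : F × F × F, ∀ v, dot3 v t = 0 → ∀ g : F → F,
      ∑ u ∈ U, g (dot3 u v) = -(g (dot3 A v) + g (-dot3 A v)) := by
  obtain ⟨A, B, hAB⟩ := exists_sum_comp_dot3_eq_neg_pair hU hUcard ht htQ
  refine ⟨A, fun v hv g => ?_⟩
  have hB : dot3 B v = -dot3 A v := by
    linear_combination hAB v hv (fun a => a) - sum_dot3_eq_zero hsum v
  rw [hAB v hv g, hB]

end Fibres

section EvenBinomialSum

variable {R S : Type*} [CommRing R] [CommRing S]

def evenBinomialSum (n : ℕ) (s c : R) : R :=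
  ∑ k ∈ range (n + 1) with Even k, 2 * (n.choose k : R) * s ^ (k / 2) * c ^ (n - k)

lemma evenBinomialSum_sq (n : ℕ) (a c : R) :
    evenBinomialSum n (a ^ 2) c = (c + a) ^ n + (c - a) ^ n := by
  rw [add_comm c, sub_eq_neg_add, add_pow, add_pow, ← sum_add_distrib, evenBinomialSum, sum_filter]
  refine sum_congr rfl fun k _ => ?_
  rcases Nat.even_or_odd k with hk | hk
  · rw [if_pos hk, hk.neg_pow, ← pow_mul, Nat.two_mul_div_two_of_even hk]
    ring
  · rw [if_neg (Nat.not_even_iff_odd.mpr hk), hk.neg_pow]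
    ring

lemma map_evenBinomialSum {G : Type*} [FunLike G R S] [RingHomClass G R S] (f : G) (n : ℕ)
    (s c : R) : f (evenBinomialSum n s c) = evenBinomialSum n (f s) (f c) := by
  simp [evenBinomialSum, map_sum, map_ofNat f]

lemma evenBinomialSum_mul (n : ℕ) (l s c : R) :
    evenBinomialSum n (l ^ 2 * s) (l * c) = l ^ n * evenBinomialSum n s c := by
  rw [evenBinomialSum, evenBinomialSum, mul_sum]
  refine sum_congr rfl fun k hk => ?_
  obtain ⟨hkn, hk⟩ := mem_filter.mp hk
  have hkn : k ≤ n := Nat.lt_succ_iff.mp (mem_range.mp hkn)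
  rw [mul_pow, mul_pow, ← pow_mul, Nat.two_mul_div_two_of_even hk,
    show l ^ n = l ^ k * l ^ (n - k) by rw [← pow_add, Nat.add_sub_cancel' hkn]]
  ring

end EvenBinomialSum

section Defect

open MvPolynomial

variable {F : Type*} [Field F] {A B : Type*} [CommRing A] [Algebra F A] [CommRing B] [Algebra F B]

def linForm (u : F × F × F) (V : A × A × A) : A :=
  u.1 • V.1 + u.2.1 • V.2.1 + u.2.2 • V.2.2

lemma linForm_eq_dot3 (u v : F × F × F) : linForm u v = dot3 u v := rfl

/-- `-½ ∑_u (u·V)²` is `σ₂` when `∑ u = 0`. The definition works over any `F`-algebra so that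
it can be evaluated on polynomials. -/
def defect (U : Finset (F × F × F)) (n : ℕ) (V : A × A × A) (c : A) : A :=
  ∑ u ∈ U, (linForm u V + c) ^ n + evenBinomialSum n ((-2⁻¹ : F) • ∑ u ∈ U, linForm u V ^ 2) c

lemma map_defect (f : A →ₐ[F] B) (U : Finset (F × F × F)) (n : ℕ) (V : A × A × A) (c : A) :
    f (defect U n V c) = defect U n (f V.1, f V.2.1, f V.2.2) (f c) := by
  simp only [defect, linForm, map_add, map_sum, map_pow, map_smul, map_evenBinomialSum]

lemma defect_smul (U : Finset (F × F × F)) (n : ℕ) (l : F) (v : F × F × F) (c : F) :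
    defect U n (l • v) (l * c) = l ^ n * defect U n v c := by
  simp only [defect, linForm_eq_dot3, dot3_smul_right, smul_eq_mul, ← mul_add, mul_pow, ← mul_sum,
    mul_left_comm (-2⁻¹ : F), evenBinomialSum_mul]

lemma degreeOf_defect_le {σ : Type*} (i : σ) (U : Finset (F × F × F)) (n : ℕ)
    {V : MvPolynomial σ F × MvPolynomial σ F × MvPolynomial σ F} {c : MvPolynomial σ F}
    (hV₁ : V.1.degreeOf i ≤ 1) (hV₂ : V.2.1.degreeOf i ≤ 1) (hV₃ : V.2.2.degreeOf i ≤ 1)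
    (hc : c.degreeOf i ≤ 1) :
    (defect U n V c).degreeOf i ≤ n := by
  have hsmul (a : F) (f : MvPolynomial σ F) : (a • f).degreeOf i ≤ f.degreeOf i := by
    rw [smul_eq_C_mul]; exact degreeOf_C_mul_le _ _ _
  have hpow {d : ℕ} (f : MvPolynomial σ F) (hf : f.degreeOf i ≤ d) (k : ℕ) :
      (f ^ k).degreeOf i ≤ k * d :=
    (degreeOf_pow_le _ _ _).trans (Nat.mul_le_mul_left k hf)
  have hlin (u : F × F × F) : (linForm u V).degreeOf i ≤ 1 := by
    refine (degreeOf_add_le _ _ _).trans (max_le ((degreeOf_add_le _ _ _).trans (max_le ?_ ?_)) ?_)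
    exacts [(hsmul _ _).trans hV₁, (hsmul _ _).trans hV₂, (hsmul _ _).trans hV₃]
  have hs : ((-2⁻¹ : F) • ∑ u ∈ U, linForm u V ^ 2).degreeOf i ≤ 2 :=
    (hsmul _ _).trans <| (degreeOf_sum_le _ _ _).trans <| Finset.sup_le fun u _ =>
      (hpow _ (hlin u) 2).trans_eq (mul_one 2)
  refine (degreeOf_add_le _ _ _).trans (max_le ?_ ?_)
  · refine (degreeOf_sum_le _ _ _).trans (Finset.sup_le fun u _ => ?_)
    exact (hpow _ ((degreeOf_add_le _ _ _).trans (max_le (hlin u) hc)) n).trans_eq (mul_one n)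
  · refine (degreeOf_sum_le _ _ _).trans (Finset.sup_le fun k hk => ?_)
    obtain ⟨hkn, hk⟩ := mem_filter.mp hk
    have hkn : k ≤ n := Nat.lt_succ_iff.mp (mem_range.mp hkn)
    have hconst : (2 * (n.choose k : MvPolynomial σ F)).degreeOf i = 0 := by
      rw [show (2 * (n.choose k : MvPolynomial σ F)) = C (2 * n.choose k : F) by
        rw [map_mul, map_natCast, map_ofNat], degreeOf_C]
    refine (degreeOf_mul_le _ _ _).trans ?_
    have h1 := (degreeOf_mul_le i _ _).trans (Nat.add_le_add hconst.le (hpow _ hs (k / 2)))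
    have h2 := hpow _ hc (n - k)
    have h3 := Nat.div_mul_cancel (even_iff_two_dvd.mp hk)
    omega

end Defect

section Vanishing

variable {F : Type*} [Field F] [Fintype F] {U : Finset (F × F × F)}

theorem defect_eq_zero_of_dot3_eq_zero (h2 : (2 : F) ≠ 0) (hU : NoDetermine U)
    (hUcard : U.card + 2 = Fintype.card F ^ 2) (hsum : ∑ u ∈ U, u = 0)
    {t : F × F × F} (ht : t ≠ 0) (htQ : quadQ t = 0) {v : F × F × F} (hv : dot3 v t = 0)
    (n : ℕ) (c : F) : defect U n v c = 0 := by
  obtain ⟨A, hA⟩ := exists_sum_comp_dot3_eq_neg_antipodal hU hUcard hsum ht htQ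
  have hs : (-2⁻¹ : F) * ∑ u ∈ U, dot3 u v ^ 2 = dot3 A v ^ 2 := by
    rw [hA v hv (· ^ 2)]
    field_simp
    ring
  rw [defect, smul_eq_mul]
  simp only [linForm_eq_dot3]
  rw [hs, evenBinomialSum_sq, hA v hv fun a => (a + c) ^ n]
  ring

open MvPolynomial in
/-- After substituting `(y, z) = (r r', -(r + r'))` the defect has degree `< |F|` in `r` and in
`r'` and vanishes on `F²`, so it is the zero polynomial; as `esymm` is injective, so is the
defect as a polynomial in `(y, z)`. -/
theorem defect_slice_eq_zero {n : ℕ} (hn : n < Fintype.card F) {c : F}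
    (h : ∀ r r' : F, defect U n (r * r', -(r + r'), 1) c = 0) (y z : F) :
    defect U n (y, z, 1) c = 0 := by
  set P : MvPolynomial (Fin 2) F := defect U n (X 1, -X 0, 1) (C c)
  have hesymm (k : ℕ) (i : Fin 2) (hk : 0 < k) (hk2 : k ≤ 2) :
      (esymm (Fin 2) F k).degreeOf i ≤ 1 := by
    classical
    rw [degreeOf_def, degrees_esymm (Fin 2) F hk (by simpa using hk2)]
    simp
  have hR : (esymmAlgHom (Fin 2) F 2 P).val =
      defect U n (esymm (Fin 2) F 2, -esymm (Fin 2) F 1, 1) (C c) := by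
    rw [esymmAlgHom_apply, map_defect]
    simp
  have hP : esymmAlgHom (Fin 2) F 2 P = 0 := by
    apply Subtype.ext
    rw [hR]
    refine eq_zero_of_eval_zero_at_prod_finset _ (fun _ => univ) (fun i => ?_) (fun x _ => ?_)
    · refine (degreeOf_defect_le i U n ?_ ?_ ?_ ?_).trans_lt (by simpa using hn)
      · exact hesymm 2 i (by norm_num) le_rfl
      · rw [degreeOf_neg]; exact hesymm 1 i (by norm_num) (by norm_num)
      · simp
      · simp
    · change aeval x _ = 0
      rw [map_defect]
      have h2 : (↑[x 0, x 1] : Multiset F).esymm 2 = x 0 * x 1 := Multiset.esymm_pair_two _ _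
      simpa [aeval_esymm_eq_multiset_esymm, h2] using h (x 0) (x 1)
  have hP0 : P = 0 := esymmAlgHom_injective F (Fintype.card_fin 2).ge (by rw [hP, map_zero])
  have := congrArg (aeval ![-z, y]) hP0
  rw [map_defect, map_zero] at this
  simpa using this

theorem defect_eq_zero (h2 : (2 : F) ≠ 0) (hU : NoDetermine U)
    (hUcard : U.card + 2 = Fintype.card F ^ 2) (hsum : ∑ u ∈ U, u = 0)
    {n : ℕ} (hn : n < Fintype.card F) (v : F × F × F) (c : F) : defect U n v c = 0 := by
  obtain ⟨y, z, w⟩ := v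
  by_cases hw : w = 0
  · subst hw
    exact defect_eq_zero_of_dot3_eq_zero h2 hU hUcard hsum (t := (0, 0, 1)) (by simp)
      (by simp [quadQ]) (by simp [dot3]) n c
  · have hslice := defect_slice_eq_zero hn (c := w⁻¹ * c)
      (fun r r' => defect_eq_zero_of_dot3_eq_zero h2 hU hUcard hsum (t := (1, r, r ^ 2))
        (by simp) (by simp [quadQ]) (by simp [dot3]; ring) n _) (w⁻¹ * y) (w⁻¹ * z)
    have hscale := defect_smul U n w (w⁻¹ * y, w⁻¹ * z, 1) (w⁻¹ * c)
    rw [hslice, mul_zero] at hscale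
    convert hscale using 2 <;> simp [hw]

end Vanishing

lemma Multiset.esymm_two_mul_two {R : Type*} [CommRing R] (s : Multiset R) :
    s.esymm 2 * 2 = s.sum ^ 2 - (s.map (· ^ 2)).sum := by
  induction s using Multiset.induction_on with
  | empty => simp [Multiset.esymm, Multiset.powersetCard_zero_right]
  | cons a s ih =>
    have h : (a ::ₘ s).esymm 2 = s.esymm 2 + a * s.sum := by
      simp [Multiset.esymm, Multiset.powersetCard_cons, Multiset.powersetCard_one,
        Multiset.map_map]
      rw [Multiset.sum_map_mul_left, Multiset.map_id']
    rw [h, add_mul, ih, Multiset.sum_cons, Multiset.map_cons, Multiset.sum_cons]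
    ring

lemma sigmaU_two_eq {F : Type*} [Field F] {U : Finset (F × F × F)} (h2 : (2 : F) ≠ 0)
    (hsum : ∑ u ∈ U, u = 0) (v : F × F × F) :
    sigmaU U v 2 = -2⁻¹ * ∑ u ∈ U, dot3 u v ^ 2 := by
  have h := (U.val.map fun u => dot3 u v).esymm_two_mul_two
  rw [Multiset.map_map] at h
  change sigmaU U v 2 * 2 = (∑ u ∈ U, dot3 u v) ^ 2 - ∑ u ∈ U, dot3 u v ^ 2 at h
  rw [sum_dot3_eq_zero hsum] at h
  field_simp
  linear_combination h

section Counting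

variable {F : Type*} [Field F] [Fintype F] [DecidableEq F]

lemma card_filter_dot3_add_eq (U : Finset (F × F × F)) (v : F × F × F) (x : F) :
    ((U.filter fun a => dot3 v a + x = 0).card : F) =
      U.card - ∑ u ∈ U, (dot3 u v + x) ^ (Fintype.card F - 1) := by
  have hq : Fintype.card F - 1 ≠ 0 := by have := Fintype.one_lt_card (α := F); omega
  rw [card_filter, card_eq_sum_ones, Nat.cast_sum, Nat.cast_sum, ← sum_sub_distrib]
  refine sum_congr rfl fun u _ => ?_
  rw [dot3_comm]
  by_cases hz : dot3 u v + x = 0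
  · rw [if_pos hz, hz, zero_pow hq]; simp
  · rw [if_neg hz, FiniteField.pow_card_sub_one_eq_one _ hz]; simp

theorem card_filter_eq_evenBinomialSum {U : Finset (F × F × F)} (h2 : (2 : F) ≠ 0)
    (hU : NoDetermine U) (hUcard : U.card + 2 = Fintype.card F ^ 2) (hsum : ∑ u ∈ U, u = 0)
    (v : F × F × F) (x : F) :
    ((U.filter fun a => dot3 v a + x = 0).card : F) =
      -2 + evenBinomialSum (Fintype.card F - 1) (sigmaU U v 2) x := by
  have hdefect := defect_eq_zero h2 hU hUcard hsum (Nat.sub_lt Fintype.card_pos one_pos) v x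
  simp only [defect, linForm_eq_dot3, smul_eq_mul] at hdefect
  have hU2 : (U.card : F) = -2 := by
    have := congrArg (Nat.cast : ℕ → F) hUcard
    push_cast [FiniteField.cast_card_eq_zero] at this
    linear_combination this
  rw [card_filter_dot3_add_eq, sigmaU_two_eq h2 hsum, hU2]
  linear_combination -hdefect

lemma add_pow_card_sub_one_add_sub_pow_card_sub_one (h2 : (2 : F) ≠ 0) {s : F} (hs : s ≠ 0)
    (x : F) :
    (x + s) ^ (Fintype.card F - 1) + (x - s) ^ (Fintype.card F - 1) =
      if x ^ 2 = s ^ 2 then 1 else 2 := by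
  have hq : Fintype.card F - 1 ≠ 0 := by have := Fintype.one_lt_card (α := F); omega
  have h2s : 2 * s ≠ 0 := mul_ne_zero h2 hs
  split_ifs with hx
  · rcases sq_eq_sq_iff_eq_or_eq_neg.mp hx with rfl | rfl
    · rw [sub_self, zero_pow hq, ← two_mul, FiniteField.pow_card_sub_one_eq_one _ h2s, add_zero]
    · rw [neg_add_cancel, zero_pow hq, zero_add,
        FiniteField.pow_card_sub_one_eq_one _ fun h => h2s (by linear_combination -h)]
  · rw [FiniteField.pow_card_sub_one_eq_one _ fun h => hx (by linear_combination (x - s) * h),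
      FiniteField.pow_card_sub_one_eq_one _ fun h => hx (by linear_combination (x + s) * h)]
    norm_num

end Counting

theorem stmt_14_general {p : ℕ} (hodd : Odd p)
    {F : Type*} [Field F] [Fintype F] [DecidableEq F]
    (hcard : Fintype.card F = p)
    (U : Finset (F × F × F))
    (hUcard : U.card = p ^ 2 - 2)
    (hU : NoDetermine U)
    (hsum : ∑ u ∈ U, u = 0)
    (v : F × F × F)
    (hsig : ∃ s : F, s ≠ 0 ∧ s ^ 2 = sigmaU U v 2) :
    ∀ x : F,
      (x ^ 2 = sigmaU U v 2 → ((U.filter (fun a => dot3 v a + x = 0)).card : F) = -1) ∧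
      (x ^ 2 ≠ sigmaU U v 2 → ((U.filter (fun a => dot3 v a + x = 0)).card : F) = 0) := by
  intro x
  obtain ⟨s, hs0, hs⟩ := hsig
  have h2 : (2 : F) ≠ 0 := Ring.two_ne_zero fun h => by
    simpa [hcard, Nat.odd_iff.mp hodd] using FiniteField.even_card_iff_char_two.mp h
  have hp : 2 ≤ p := hcard ▸ Fintype.one_lt_card
  have hUcard' : U.card + 2 = Fintype.card F ^ 2 := by
    rw [hUcard, hcard, Nat.sub_add_cancel (by nlinarith)]
  have hN := card_filter_eq_evenBinomialSum h2 hU hUcard' hsum v x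
  rw [← hs, evenBinomialSum_sq, add_pow_card_sub_one_add_sub_pow_card_sub_one h2 hs0] at hN
  rw [hN, ← hs]
  constructor <;> intro hx <;> simp only [hx, if_true, if_false] <;> norm_num

theorem stmt_14 {p : ℕ} (hp : p.Prime) (hodd : Odd p)
    {F : Type*} [Field F] [Fintype F] [DecidableEq F]
    (hcard : Fintype.card F = p)
    (U : Finset (F × F × F))
    (hUcard : U.card = p ^ 2 - 2)
    (hU : NoDetermine U)
    (hsum : ∑ u ∈ U, u = 0)
    (v : F × F × F) (hv : v ≠ 0)
    (hsig : ∃ s : F, s ≠ 0 ∧ s ^ 2 = sigmaU U v 2) :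
    ∀ x : F,
      (x ^ 2 = sigmaU U v 2 → ((U.filter (fun a => dot3 v a + x = 0)).card : F) = -1) ∧
      (x ^ 2 ≠ sigmaU U v 2 → ((U.filter (fun a => dot3 v a + x = 0)).card : F) = 0) :=
  stmt_14_general hodd hcard U hUcard hU hsum v hsig
end
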